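/- If G is a d-sphere with d≥0, then its Euler characteristic satisfies χ(G)=1+(−1)^d; in particular, every unit sphere S(v) in a d-manifold has χ(S(v))=1+(−1)^{d−1}. -/
import Mathlib


open scoped Classical

/-- A finite simple graph: a finite vertex set together with a symmetric, irreflexive
adjacency relation supported on the vertex set. -/
structure FGraph (V : Type) where
  verts : Finset V
  Adj : V → V → Prop
  symm : ∀ {a b}, Adj a b → Adj b a
  loopless : ∀ a, ¬ Adj a a
  mem_of_adj : ∀ {a b}, Adj a b → a ∈ verts

namespace FGraph

variable {V W : Type}

/-- The subgraph induced on the vertices satisfying `P`. -/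
noncomputable def induce (G : FGraph V) (P : V → Prop) : FGraph V where
  verts := G.verts.filter P
  Adj a b := G.Adj a b ∧ P a ∧ P b
  symm h := ⟨G.symm h.1, h.2.2, h.2.1⟩
  loopless a h := G.loopless a h.1
  mem_of_adj h := Finset.mem_filter.mpr ⟨G.mem_of_adj h.1, h.2.1⟩

/-- The unit sphere of a vertex: the subgraph induced on its neighbors. -/
noncomputable def unitSphere (G : FGraph V) (v : V) : FGraph V :=
  G.induce (fun w => G.Adj v w)

/-- The graph with the vertex `v` (and its edges) removed. -/
noncomputable def erase (G : FGraph V) (v : V) : FGraph V :=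
  G.induce (fun w => w ≠ v)

/-- Inductive definition of contractibility: the one-point graph is contractible, and a
graph is contractible if some vertex has a contractible unit sphere and contractible
complement. -/
inductive Contractible : FGraph V → Prop
  | single (G : FGraph V) (v : V) (h : G.verts = {v}) : Contractible G
  | step (G : FGraph V) (v : V) (hv : v ∈ G.verts)
      (h1 : Contractible (G.unitSphere v)) (h2 : Contractible (G.erase v)) :
      Contractible G

mutual
  /-- `G` is a `d`-sphere: the empty graph is the `(-1)`-sphere, and a `d`-manifold is a
  `d`-sphere if removing some vertex renders it contractible. -/
  inductive IsSphere : ℤ → FGraph V → Prop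
    | empty (G : FGraph V) (h : G.verts = ∅) : IsSphere (-1) G
    | punctured (d : ℤ) (G : FGraph V) (hm : IsManifold d G) (v : V) (hv : v ∈ G.verts)
        (hc : Contractible (G.erase v)) : IsSphere d G
  /-- For `d ≥ 0`, `G` is a `d`-manifold iff every unit sphere is a `(d-1)`-sphere. -/
  inductive IsManifold : ℤ → FGraph V → Prop
    | intro (d : ℤ) (hd : 0 ≤ d) (G : FGraph V)
        (h : ∀ v ∈ G.verts, IsSphere (d - 1) (G.unitSphere v)) : IsManifold d G
end

/-- A simplex of `G`: the vertex set of a complete subgraph. -/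
def IsSimplex (G : FGraph V) (x : Finset V) : Prop :=
  x.Nonempty ∧ ↑x ⊆ G.verts ∧ ∀ a ∈ x, ∀ b ∈ x, a ≠ b → G.Adj a b

/-- The Barycentric refinement: vertices are the simplices of `G`, two being adjacent iff
one is strictly contained in the other. -/
noncomputable def barycentric (G : FGraph V) : FGraph (Finset V) where
  verts := G.verts.powerset.filter (fun x => G.IsSimplex x)
  Adj x y := G.IsSimplex x ∧ G.IsSimplex y ∧ (x ⊂ y ∨ y ⊂ x)
  symm h := ⟨h.2.1, h.1, h.2.2.symm⟩
  loopless x h := by rcases h.2.2 with h' | h' <;> exact (ssubset_irrefl x h')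
  mem_of_adj h := Finset.mem_filter.mpr ⟨Finset.mem_powerset.mpr h.1.2.1, h.1⟩

/-- Number of simplices of `G` with exactly `j` vertices (so `numSimplices G (k+1)` is
the `f`-vector entry `f_k(G)`). -/
noncomputable def numSimplices (G : FGraph V) (j : ℕ) : ℕ :=
  (G.verts.powerset.filter (fun x => G.IsSimplex x ∧ x.card = j)).card

/-- Euler characteristic `χ(G) = Σ_{k ≥ 0} (-1)^k f_k(G)`, where `f_k` counts the
simplices with `k+1` vertices. -/
noncomputable def euler (G : FGraph V) : ℤ :=
  ∑ k ∈ Finset.range G.verts.card, (-1 : ℤ) ^ k * G.numSimplices (k + 1)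

/-- The level set `{f = c}`: the subgraph of the Barycentric refinement induced by the
simplices on which `f - c` changes sign. -/
noncomputable def levelSet (G : FGraph V) (f : V → ℝ) (c : ℝ) : FGraph (Finset V) :=
  G.barycentric.induce (fun x => (∃ a ∈ x, f a - c < 0) ∧ (∃ b ∈ x, 0 < f b - c))

/-- Graph isomorphism. -/
def Iso (G : FGraph V) (H : FGraph W) : Prop :=
  ∃ φ : V → W, Set.BijOn φ ↑G.verts ↑H.verts ∧
    ∀ a ∈ G.verts, ∀ b ∈ G.verts, (G.Adj a b ↔ H.Adj (φ a) (φ b))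

/-- Zykov join of two graphs: disjoint union plus all edges between the two parts. -/
noncomputable def join (G : FGraph V) (H : FGraph W) : FGraph (V ⊕ W) where
  verts := G.verts.disjSum H.verts
  Adj a b :=
    match a, b with
    | .inl a, .inl b => G.Adj a b
    | .inr a, .inr b => H.Adj a b
    | .inl a, .inr b => a ∈ G.verts ∧ b ∈ H.verts
    | .inr a, .inl b => b ∈ G.verts ∧ a ∈ H.verts
  symm {a b} h := by
    cases a <;> cases b <;> simp_all <;> first | exact G.symm h | exact H.symm h
  loopless a h := by
    cases a <;> simp_all <;> first | exact G.loopless _ h | exact H.loopless _ h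
  mem_of_adj {a b} h := by
    cases a <;> cases b <;> simp_all [Finset.mem_disjSum] <;>
      first | exact G.mem_of_adj h | exact H.mem_of_adj h

/-- Union of two graphs on the same vertex type. -/
noncomputable def union (G H : FGraph V) : FGraph V where
  verts := G.verts ∪ H.verts
  Adj a b := G.Adj a b ∨ H.Adj a b
  symm h := h.imp G.symm H.symm
  loopless a h := h.elim (G.loopless a) (H.loopless a)
  mem_of_adj h :=
    h.elim (fun h' => Finset.mem_union_left _ (G.mem_of_adj h'))
      (fun h' => Finset.mem_union_right _ (H.mem_of_adj h'))

/-- A `d`-ball: a graph of the form `S - v` for a `d`-sphere `S` and a vertex `v` of `S`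
(up to graph isomorphism). -/
def IsBall (d : ℤ) (H : FGraph W) : Prop :=
  ∃ (S : FGraph ℕ) (v : ℕ), IsSphere d S ∧ v ∈ S.verts ∧ Iso H (S.erase v)

/-- A `d`-manifold with boundary: every unit sphere is a `(d-1)`-sphere or a `(d-1)`-ball. -/
def IsManifoldWithBoundary (d : ℤ) (G : FGraph V) : Prop :=
  ∀ v ∈ G.verts, IsSphere (d - 1) (G.unitSphere v) ∨ IsBall (d - 1) (G.unitSphere v)

/-- The cyclic graph `C_n` on the vertex set `Fin n`. -/
def cycleGraph (n : ℕ) : FGraph (Fin n) where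
  verts := Finset.univ
  Adj a b := a ≠ b ∧ ((a.val + 1) % n = b.val ∨ (b.val + 1) % n = a.val)
  symm h := ⟨h.1.symm, h.2.symm⟩
  loopless a h := h.1 rfl
  mem_of_adj _ := Finset.mem_univ _

/-- `G` is a disjoint union of cyclic graphs `C_n` with `n ≥ 4`: the vertex set splits
into pairwise disjoint pieces, edges never cross between pieces, and each piece induces
a graph isomorphic to a `C_n` with `n ≥ 4`. -/
def IsDisjointUnionOfCycles (G : FGraph V) : Prop :=
  ∃ P : Finset (Finset V),
    (∀ S ∈ P, ↑S ⊆ G.verts) ∧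
    (∀ S ∈ P, ∀ T ∈ P, S ≠ T → Disjoint S T) ∧
    (∀ v ∈ G.verts, ∃ S ∈ P, v ∈ S) ∧
    (∀ a b, G.Adj a b → ∀ S ∈ P, a ∈ S → b ∈ S) ∧
    (∀ S ∈ P, ∃ n, 4 ≤ n ∧ Iso (G.induce (· ∈ S)) (cycleGraph n))

/-- Poincaré–Hopf index `i_f(v) = 1 - χ(S^-_f(v))`. -/
noncomputable def pindex (G : FGraph V) (f : V → ℝ) (v : V) : ℤ :=
  1 - ((G.unitSphere v).induce (fun w => f w < f v)).euler

/-- Curvature `K(v) = Σ_{k ≥ 0} (-1)^k f_{k-1}(S(v))/(k+1)` with `f_{-1} = 1`. -/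
noncomputable def curvature (G : FGraph V) (v : V) : ℝ :=
  ∑ k ∈ Finset.range (G.verts.card + 1),
    (-1 : ℝ) ^ k * (if k = 0 then 1 else ((G.unitSphere v).numSimplices k : ℝ)) / (k + 1)

end FGraph

/-- `sign(a + i b) = sign(a) + i sign(b)`. -/
noncomputable def csgn (z : ℂ) : ℂ :=
  ⟨Real.sign z.re, Real.sign z.im⟩

/-- The set `U = {1+i, 1-i, -1+i, -1-i}` of possible values of `csgn`. -/
noncomputable def signU : Finset ℂ :=
  {1 + Complex.I, 1 - Complex.I, -1 + Complex.I, -1 - Complex.I}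

namespace FGraph

variable {V : Type}

/-- The set of values of `sign(ψ - c)` attained on the finite vertex set `x`. -/
noncomputable def signValues (ψ : V → ℂ) (c : ℂ) (x : Finset V) : Finset ℂ :=
  x.image (fun v => csgn (ψ v - c))

/-- The level set `{ψ = c}` of a complex-valued function: the subgraph of the Barycentric
refinement induced by the simplices on which `sign(ψ - c)` takes at least three distinct
values, including `-1+i` and `1-i`. -/
noncomputable def complexLevelSet (G : FGraph V) (ψ : V → ℂ) (c : ℂ) : FGraph (Finset V) :=
  G.barycentric.induce (fun x =>
    3 ≤ (signValues ψ c x).card ∧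
    (-1 + Complex.I) ∈ signValues ψ c x ∧ (1 - Complex.I) ∈ signValues ψ c x)

/-- The level set `{ψ = 0}_e` for a two-element subset `e ⊆ U`: the subgraph of the
Barycentric refinement induced by the simplices on which `sign(ψ)` attains both values
of `e` and at least three distinct values in total. -/
noncomputable def complexLevelSetE (G : FGraph V) (ψ : V → ℂ) (e : Finset ℂ) :
    FGraph (Finset V) :=
  G.barycentric.induce (fun x =>
    (∀ u ∈ e, u ∈ signValues ψ 0 x) ∧ 3 ≤ (signValues ψ 0 x).card)

/-- `Ψ^{-1}(t)`: the subgraph of the Barycentric refinement induced by the simplices on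
which `sign(ψ)` attains all values of `t`. -/
noncomputable def signPreimage (G : FGraph V) (ψ : V → ℂ) (t : Finset ℂ) :
    FGraph (Finset V) :=
  G.barycentric.induce (fun x => ∀ u ∈ t, u ∈ signValues ψ 0 x)

/-- The sign vectors of `F - c` attained on the finite vertex set `x`. -/
noncomputable def vecSignValues {k : ℕ} (F : V → Fin k → ℝ) (c : Fin k → ℝ)
    (x : Finset V) : Finset (Fin k → ℝ) :=
  x.image (fun v j => Real.sign (F v j - c j))

/-- The level set `{F = c}` of an `ℝ^k`-valued function: the subgraph of the Barycentric
refinement induced by the simplices on which the sign vector of `F - c` takes at least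
`k+1` distinct values, including the `k` vectors `(1,…,1,-1,1,…,1)`. -/
noncomputable def vecLevelSet (G : FGraph V) {k : ℕ} (F : V → Fin k → ℝ) (c : Fin k → ℝ) :
    FGraph (Finset V) :=
  G.barycentric.induce (fun x =>
    k + 1 ≤ (vecSignValues F c x).card ∧
    ∀ j : Fin k, (fun i => if i = j then (-1 : ℝ) else 1) ∈ vecSignValues F c x)

end FGraph

/-- The complete graph on `Fin n`. -/
def completeFGraph (n : ℕ) : FGraph (Fin n) where
  verts := Finset.univ
  Adj a b := a ≠ b
  symm h := h.symm
  loopless a h := h rfl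
  mem_of_adj _ := Finset.mem_univ _

/-- Stirling numbers of the second kind. -/
def stirling2 : ℕ → ℕ → ℕ
  | 0, 0 => 1
  | 0, _ + 1 => 0
  | _ + 1, 0 => 0
  | n + 1, m + 1 => (m + 1) * stirling2 n (m + 1) + stirling2 n m

namespace FGraph

variable {V : Type}

/-- The finset of simplices of `G`. -/
noncomputable def simplices (G : FGraph V) : Finset (Finset V) :=
  G.verts.powerset.filter G.IsSimplex

lemma mem_simplices {G : FGraph V} {x : Finset V} :
    x ∈ G.simplices ↔ G.IsSimplex x := by
  constructor
  · intro h; exact (Finset.mem_filter.mp h).2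
  · intro h
    exact Finset.mem_filter.mpr ⟨Finset.mem_powerset.mpr (by exact_mod_cast h.2.1), h⟩

/-- Signed sum over simplices. -/
noncomputable def eulerSum (G : FGraph V) : ℤ :=
  ∑ x ∈ G.simplices, (-1 : ℤ) ^ (x.card + 1)

lemma numSimplices_eq (G : FGraph V) (j : ℕ) :
    G.numSimplices j = (G.simplices.filter (fun x => x.card = j)).card := by
  unfold numSimplices simplices
  rw [Finset.filter_filter]

lemma card_mem_range {G : FGraph V} {x : Finset V} (hx : x ∈ G.simplices) :
    x.card ∈ Finset.range (G.verts.card + 1) := by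
  rw [Finset.mem_range, Nat.lt_succ_iff]
  exact Finset.card_le_card (Finset.mem_powerset.mp (Finset.mem_filter.mp hx).1)

lemma euler_eq_eulerSum (G : FGraph V) : G.euler = G.eulerSum := by
  have h1 : G.eulerSum = ∑ j ∈ Finset.range (G.verts.card + 1),
      ∑ x ∈ G.simplices.filter (fun x => x.card = j), (-1 : ℤ) ^ (x.card + 1) :=
    (Finset.sum_fiberwise_of_maps_to (fun x hx => card_mem_range hx) _).symm
  have h2 : ∀ j, ∑ x ∈ G.simplices.filter (fun x => x.card = j),
      (-1 : ℤ) ^ (x.card + 1) = (-1 : ℤ) ^ (j + 1) * (G.numSimplices j : ℤ) := by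
    intro j
    rw [numSimplices_eq]
    rw [Finset.sum_congr rfl (fun x hx => by
      rw [(Finset.mem_filter.mp hx).2])]
    rw [Finset.sum_const, nsmul_eq_mul, mul_comm]
  have h0 : G.numSimplices 0 = 0 := by
    rw [numSimplices_eq]
    apply Finset.card_eq_zero.mpr
    apply Finset.filter_false_of_mem
    intro x hx hc
    exact (Finset.nonempty_iff_ne_empty.mp (mem_simplices.mp hx).1)
      (Finset.card_eq_zero.mp hc)
  rw [h1]
  rw [Finset.sum_congr rfl (fun j _ => h2 j)]
  rw [Finset.sum_range_succ']
  simp only [h0, Nat.cast_zero, mul_zero, add_zero]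
  unfold euler
  apply Finset.sum_congr rfl
  intro k _
  have : (-1 : ℤ) ^ (k + 1 + 1) = (-1 : ℤ) ^ k := by ring
  rw [this]

lemma isSimplex_induce {G : FGraph V} {P : V → Prop} {x : Finset V} :
    (G.induce P).IsSimplex x ↔ G.IsSimplex x ∧ ∀ w ∈ x, P w := by
  constructor
  · rintro ⟨hne, hsub, hadj⟩
    have hmem : ∀ w ∈ x, w ∈ G.verts ∧ P w := by
      intro w hw
      have h' : w ∈ G.verts.filter P := hsub hw
      exact Finset.mem_filter.mp h'
    refine ⟨⟨hne, fun w hw => (hmem w hw).1, fun a ha b hb hab => (hadj a ha b hb hab).1⟩,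
      fun w hw => (hmem w hw).2⟩
  · rintro ⟨⟨hne, hsub, hadj⟩, hP⟩
    refine ⟨hne, ?_, fun a ha b hb hab => ⟨hadj a ha b hb hab, hP a ha, hP b hb⟩⟩
    intro w hw
    show w ∈ (G.verts.filter P : Finset V)
    exact Finset.mem_filter.mpr ⟨hsub hw, hP w hw⟩

lemma simplices_erase (G : FGraph V) (v : V) :
    (G.erase v).simplices = G.simplices.filter (fun x => v ∉ x) := by
  ext x
  simp only [mem_simplices, Finset.mem_filter, mem_simplices, erase, isSimplex_induce]
  constructor
  · rintro ⟨hs, hP⟩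
    exact ⟨hs, fun hv => hP v hv rfl⟩
  · rintro ⟨hs, hv⟩
    exact ⟨hs, fun w hw hwv => hv (hwv ▸ hw)⟩

lemma mem_simplices_unitSphere {G : FGraph V} {v : V} {x : Finset V} :
    x ∈ (G.unitSphere v).simplices ↔ G.IsSimplex x ∧ ∀ w ∈ x, G.Adj v w := by
  rw [mem_simplices]; exact isSimplex_induce

lemma notMem_of_unitSphere {G : FGraph V} {v : V} {x : Finset V}
    (hx : x ∈ (G.unitSphere v).simplices) : v ∉ x := by
  intro hv
  exact G.loopless v ((mem_simplices_unitSphere.mp hx).2 v hv)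

/-- Key deletion formula: `χ(G) = χ(G - v) + 1 - χ(S(v))`. -/
lemma eulerSum_erase_formula (G : FGraph V) (v : V) (hv : v ∈ G.verts) :
    G.eulerSum = (G.erase v).eulerSum + 1 - (G.unitSphere v).eulerSum := by
  have hsplit : G.eulerSum =
      (∑ x ∈ G.simplices.filter (fun x => v ∈ x), (-1 : ℤ) ^ (x.card + 1)) +
      (∑ x ∈ G.simplices.filter (fun x => v ∉ x), (-1 : ℤ) ^ (x.card + 1)) :=
    (Finset.sum_filter_add_sum_filter_not _ _ _).symm
  have h2 : (∑ x ∈ G.simplices.filter (fun x => v ∉ x), (-1 : ℤ) ^ (x.card + 1)) =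
      (G.erase v).eulerSum := by
    unfold eulerSum; rw [simplices_erase]
  have hemp : (∅ : Finset V) ∉ (G.unitSphere v).simplices := by
    intro h
    exact (mem_simplices.mp h).1.ne_empty rfl
  have h1 : (∑ x ∈ G.simplices.filter (fun x => v ∈ x), (-1 : ℤ) ^ (x.card + 1)) =
      ∑ y ∈ insert ∅ (G.unitSphere v).simplices, (-1 : ℤ) ^ (y.card + 2) := by
    apply Finset.sum_nbij' (fun x => x.erase v) (fun y => insert v y)
    · -- membership forward
      intro x hx
      obtain ⟨hxs, hvx⟩ := Finset.mem_filter.mp hx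
      rw [Finset.mem_insert]
      rcases Finset.eq_empty_or_nonempty (x.erase v) with he | hne
      · left; exact he
      · right
        rw [mem_simplices_unitSphere]
        obtain ⟨_, hsub, hadj⟩ := mem_simplices.mp hxs
        have hmem : ∀ w ∈ x.erase v, w ∈ x ∧ w ≠ v := by
          intro w hw
          exact ⟨Finset.mem_of_mem_erase hw, Finset.ne_of_mem_erase hw⟩
        refine ⟨⟨hne, ?_, ?_⟩, ?_⟩
        · intro w hw
          exact hsub ((hmem w hw).1)
        · intro a ha b hb hab
          exact hadj a (hmem a ha).1 b (hmem b hb).1 hab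
        · intro w hw
          obtain ⟨hwx, hwv⟩ := hmem w hw
          exact G.symm (hadj w hwx v hvx hwv)
    · -- membership backward
      intro y hy
      rw [Finset.mem_filter]
      refine ⟨?_, Finset.mem_insert_self v y⟩
      rw [mem_simplices]
      rcases Finset.mem_insert.mp hy with he | hys
      · subst he
        refine ⟨⟨v, Finset.mem_insert_self v ∅⟩, ?_, ?_⟩
        · intro w hw
          have hw' := Finset.mem_insert.mp (Finset.mem_coe.mp hw)
          simp only [Finset.notMem_empty, or_false] at hw'
          subst hw'
          exact Finset.mem_coe.mpr hv
        · intro a ha b hb hab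
          simp only [Finset.mem_insert, Finset.notMem_empty, or_false] at ha hb
          exact absurd (ha.trans hb.symm) hab
      · obtain ⟨⟨hyne, hysub, hyadj⟩, hyadjv⟩ := mem_simplices_unitSphere.mp hys
        refine ⟨⟨v, Finset.mem_insert_self v y⟩, ?_, ?_⟩
        · intro w hw
          rcases Finset.mem_insert.mp (Finset.mem_coe.mp hw) with rfl | hw'
          · exact Finset.mem_coe.mpr hv
          · exact hysub hw'
        · intro a ha b hb hab
          rcases Finset.mem_insert.mp ha with rfl | ha' <;>
            rcases Finset.mem_insert.mp hb with rfl | hb'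
          · exact absurd rfl hab
          · exact hyadjv b hb'
          · exact G.symm (hyadjv a ha')
          · exact hyadj a ha' b hb' hab
    · -- left inverse
      intro x hx
      exact Finset.insert_erase (Finset.mem_filter.mp hx).2
    · -- right inverse
      intro y hy
      apply Finset.erase_insert
      rcases Finset.mem_insert.mp hy with he | hys
      · subst he; exact Finset.notMem_empty v
      · exact notMem_of_unitSphere hys
    · -- values
      intro x hx
      obtain ⟨hxs, hvx⟩ := Finset.mem_filter.mp hx
      have hcard : (x.erase v).card + 1 = x.card := by
        rw [Finset.card_erase_of_mem hvx]
        exact Nat.succ_pred_eq_of_pos (Finset.card_pos.mpr ⟨v, hvx⟩)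
      have : (x.erase v).card + 2 = x.card + 1 := by omega
      rw [this]
  have h3 : (∑ y ∈ insert ∅ (G.unitSphere v).simplices, (-1 : ℤ) ^ (y.card + 2)) =
      1 - (G.unitSphere v).eulerSum := by
    have hterm : ∀ y ∈ (G.unitSphere v).simplices,
        (-1 : ℤ) ^ (y.card + 2) = -((-1 : ℤ) ^ (y.card + 1)) := fun y _ => by ring
    rw [Finset.sum_insert hemp, Finset.sum_congr rfl hterm, Finset.sum_neg_distrib,
      Finset.card_empty]
    unfold eulerSum
    rw [sub_eq_add_neg]
    norm_num
  rw [hsplit, h1, h2, h3]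
  ring

/-- Contractible graphs have `eulerSum = 1`. -/
lemma eulerSum_contractible {G : FGraph V} (h : Contractible G) : G.eulerSum = 1 := by
  induction h with
  | single G v hver =>
    have : G.simplices = {{v}} := by
      ext x
      rw [mem_simplices]
      simp only [Finset.mem_singleton]
      constructor
      · rintro ⟨hne, hsub, _⟩
        apply Finset.Subset.antisymm
        · intro w hw
          have h' := hsub hw
          rw [hver] at h'
          exact Finset.mem_coe.mp h'
        · intro w hw
          have hwv : w = v := Finset.mem_singleton.mp hw
          obtain ⟨a, ha⟩ := hne
          have h' := hsub ha
          rw [hver] at h'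
          have hav : a = v := Finset.mem_singleton.mp (Finset.mem_coe.mp h')
          rw [hwv, ← hav]
          exact ha
      · rintro rfl
        refine ⟨⟨v, Finset.mem_singleton_self v⟩, ?_, ?_⟩
        · intro w hw
          have : w = v := Finset.mem_singleton.mp (Finset.mem_coe.mp hw)
          subst this
          apply Finset.mem_coe.mpr
          rw [hver]
          exact Finset.mem_singleton_self w
        · intro a ha b hb hab
          simp only [Finset.mem_singleton] at ha hb
          exact absurd (ha.trans hb.symm) hab
    unfold eulerSum
    rw [this]
    simp
  | step G v hv h1 h2 ih1 ih2 =>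
    rw [eulerSum_erase_formula G v hv, ih1, ih2]
    ring

lemma eulerSum_empty {G : FGraph V} (h : G.verts = ∅) : G.eulerSum = 0 := by
  have : G.simplices = ∅ := by
    ext x
    rw [mem_simplices]
    simp only [Finset.notMem_empty, iff_false]
    rintro ⟨⟨a, ha⟩, hsub, _⟩
    have := hsub ha
    rw [h] at this
    simpa using this
  unfold eulerSum
  rw [this]
  simp

/-- Main induction: a `(n-1)`-sphere has `eulerSum = 1 + (-1)^(n-1)` (real zpow). -/
lemma eulerSum_sphere : ∀ n : ℕ, ∀ (V : Type) (G : FGraph V),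
    IsSphere ((n : ℤ) - 1) G → ((G.eulerSum : ℝ) = 1 + (-1 : ℝ) ^ ((n : ℤ) - 1)) := by
  intro n
  induction n using Nat.strong_induction_on with
  | _ n ih =>
    intro V G h
    generalize hgen : ((n : ℤ) - 1) = d at h
    cases h with
    | empty G hemp =>
      have hn : n = 0 := by omega
      subst hn
      rw [eulerSum_empty hemp]
      norm_num
    | punctured d G hm v hv hc =>
      cases hm with
      | intro d hd G hsph =>
        obtain ⟨m, rfl⟩ : ∃ m, n = m + 1 := ⟨n - 1, by omega⟩
        subst hgen
        have hSv : IsSphere ((m : ℤ) - 1) (G.unitSphere v) := by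
          have h' := hsph v hv
          have hdim : ((m + 1 : ℕ) : ℤ) - 1 - 1 = (m : ℤ) - 1 := by push_cast; ring
          rwa [hdim] at h'
        have ihS : ((G.unitSphere v).eulerSum : ℝ) = 1 + (-1 : ℝ) ^ ((m : ℤ) - 1) :=
          ih m (by omega) V (G.unitSphere v) hSv
        have hform := eulerSum_erase_formula G v hv
        have hcontr : ((G.erase v).eulerSum : ℝ) = 1 := by
          rw [eulerSum_contractible hc]; norm_num
        have hmain : (G.eulerSum : ℝ) =
            ((G.erase v).eulerSum : ℝ) + 1 - ((G.unitSphere v).eulerSum : ℝ) := by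
          rw [hform]; push_cast; ring
        rw [hmain, hcontr, ihS]
        have hne : (-1 : ℝ) ≠ 0 := by norm_num
        have hcast : ((m + 1 : ℕ) : ℤ) - 1 = ((m : ℤ) - 1) + 1 := by push_cast; ring
        rw [hcast, zpow_add₀ hne]
        ring

end FGraph

/-- A `d`-sphere with `d ≥ 0` has Euler characteristic `1 + (-1)^d`; in
particular, every unit sphere in a `d`-manifold has Euler characteristic
`1 + (-1)^(d-1)`. -/
theorem euler_characteristic_of_spheres :
    (∀ (V : Type) (G : FGraph V) (d : ℤ), 0 ≤ d → FGraph.IsSphere d G →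
      (G.euler : ℝ) = 1 + (-1 : ℝ) ^ d) ∧
    (∀ (V : Type) (G : FGraph V) (d : ℤ), FGraph.IsManifold d G →
      ∀ v ∈ G.verts, ((G.unitSphere v).euler : ℝ) = 1 + (-1 : ℝ) ^ (d - 1)) := by
  constructor
  · intro V G d hd hs
    obtain ⟨n, rfl⟩ : ∃ n : ℕ, d = (n : ℤ) - 1 :=
      ⟨(d + 1).toNat, by omega⟩
    rw [FGraph.euler_eq_eulerSum]
    exact FGraph.eulerSum_sphere n V G hs
  · intro V G d hm v hv
    cases hm with
    | intro d hd G hsph =>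
      have hSv := hsph v hv
      obtain ⟨n, hn⟩ : ∃ n : ℕ, d - 1 = (n : ℤ) - 1 := ⟨d.toNat, by omega⟩
      rw [FGraph.euler_eq_eulerSum, hn]
      exact FGraph.eulerSum_sphere n V (G.unitSphere v) (hn ▸ hSv)
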